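/- For θ = (θ₁, θ₂) ∈ ℝ², let ψ_θ := exp(−i(θ₁ σ_y − θ₂ σ_x)) e₀ ∈ ℂ², where σ_x = [[0,1],[1,0]], σ_y = [[0,−i],[i,0]], exp is the matrix exponential, and e₀ = (1,0)ᵀ. Then for all complex numbers z₁ = u₁ + i v₁ and z₂ = u₂ + i v₂ one has lim_{n→∞} ( ⟨ ψ_{(u₁/√n, v₁/√n)}, ψ_{(u₂/√n, v₂/√n)} ⟩ )ⁿ = exp( conj(z₁)·z₂ − |z₁|²/2 − |z₂|²/2 ), where the inner product on ℂ² is conjugate-linear in the first argument. (Equivalently: the inner product of the n-fold tensor powers ψ_{(u₁/√n,v₁/√n)}^{⊗n} and ψ_{(u₂/√n,v₂/√n)}^{⊗n} converges to the overlap ⟨Coh(z₁), Coh(z₂)⟩ of the corresponding coherent states; this is weak quantum local asymptotic normality for pure qubit states.) -/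

import Mathlib

/-!
The generator `X = -i(θ₁σ_y - θ₂σ_x)` is the off-diagonal matrix with entries `-conj w`, `w`,
where `w = θ₁ + iθ₂`, so `X² = -|w|²`; splitting the exponential series into even and odd
powers gives `ψ_θ = (cos |w|, sinc |w| · w)`. For `w = z/√n` the overlap is therefore
`cos(|z₁|/√n) cos(|z₂|/√n) + sinc(|z₁|/√n) sinc(|z₂|/√n) conj z₁ z₂ / n`, and
`cos x - 1 = -(x²/2) sinc(x/2)²` shows that `n` times (overlap − 1) tends to
`L = conj z₁ z₂ - |z₁|²/2 - |z₂|²/2`, whence the `n`-th power tends to `exp L`.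
-/

open Matrix Filter
open scoped ComplexConjugate

noncomputable section

namespace QMCPaper

/-- The matrix exponential, defined by its power series. -/
def matExp {ι : Type*} [Fintype ι] [DecidableEq ι] (M : Matrix ι ι ℂ) :
    Matrix ι ι ℂ :=
  ∑' j : ℕ, ((j.factorial : ℂ))⁻¹ • M ^ j

/-- The Pauli matrix `σ_x`. -/
def pauliX : Matrix (Fin 2) (Fin 2) ℂ := !![0, 1; 1, 0]

/-- The Pauli matrix `σ_y`. -/
def pauliY : Matrix (Fin 2) (Fin 2) ℂ := !![0, -Complex.I; Complex.I, 0]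

/-- The rotated qubit state `ψ_θ = exp(−i(θ₁ σ_y − θ₂ σ_x)) e₀`. -/
def qubitState (θ₁ θ₂ : ℝ) : Fin 2 → ℂ :=
  matExp ((-Complex.I) • ((θ₁ : ℂ) • pauliY - (θ₂ : ℂ) • pauliX)) *ᵥ ![1, 0]

end QMCPaper

namespace Real

open Nat

lemma mul_sinc (x : ℝ) : x * sinc x = sin x := by
  rcases eq_or_ne x 0 with rfl | hx
  · simp
  · rw [sinc_of_ne_zero hx, mul_div_cancel₀ _ hx]

lemma cos_sub_one_eq_mul_sinc_sq (x : ℝ) : cos x - 1 = -(x ^ 2 / 2) * sinc (x / 2) ^ 2 := by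
  have hcos : cos x = 2 * cos (x / 2) ^ 2 - 1 := by
    rw [← cos_two_mul, mul_div_cancel₀ _ two_ne_zero]
  linear_combination hcos + 2 * sin_sq_add_cos_sq (x / 2) +
    2 * (x / 2 * sinc (x / 2) + sin (x / 2)) * mul_sinc (x / 2)

lemma hasSum_sinc (r : ℝ) :
    HasSum (fun n : ℕ => (-1) ^ n * r ^ (2 * n) / (2 * n + 1)!) (sinc r) := by
  rcases eq_or_ne r 0 with rfl | hr
  · convert hasSum_ite_eq 0 (1 : ℝ) using 1
    · ext n
      rcases n with _ | n <;> simp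
    · exact sinc_zero
  · rw [sinc_of_ne_zero hr]
    convert! (hasSum_sin r).div_const r using 2 with n
    field_simp
    ring

end Real

open Nat in
theorem hasSum_exp_series_of_sq_eq_neg_sq {𝕂 A : Type*} [RCLike 𝕂] [Semiring A] [Algebra 𝕂 A]
    [TopologicalSpace A] [ContinuousAdd A] [ContinuousSMul 𝕂 A] {x : A} {r : ℝ}
    (hx : x ^ 2 = -((r : 𝕂) ^ 2) • 1) :
    HasSum (fun n : ℕ => ((n ! : 𝕂))⁻¹ • x ^ n)
      ((Real.cos r : 𝕂) • 1 + (Real.sinc r : 𝕂) • x) := by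
  have hpow (k : ℕ) : x ^ (2 * k) = ((-1) ^ k * (r : 𝕂) ^ (2 * k)) • 1 := by
    rw [pow_mul, hx, smul_pow, one_pow, neg_pow, pow_mul]
  refine HasSum.even_add_odd ?_ ?_
  · convert ((RCLike.hasSum_ofReal 𝕂).mpr (Real.hasSum_cos r)).smul_const (1 : A) using 2 with k
    rw [hpow, smul_smul]
    congr 1
    push_cast
    ring
  · convert ((RCLike.hasSum_ofReal 𝕂).mpr (Real.hasSum_sinc r)).smul_const x using 2 with k
    rw [pow_succ, hpow, smul_mul_assoc, one_mul, smul_smul]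
    congr 1
    push_cast
    ring

section Limits

open Real Filter Topology

lemma tendsto_div_sqrt_natCast_nhds_zero (a : ℝ) :
    Tendsto (fun n : ℕ => a / √n) atTop (𝓝 0) :=
  tendsto_const_nhds.div_atTop (tendsto_sqrt_atTop.comp tendsto_natCast_atTop_atTop)

lemma tendsto_sinc_div_sqrt_natCast (a : ℝ) :
    Tendsto (fun n : ℕ => sinc (a / √n)) atTop (𝓝 1) := by
  simpa [Function.comp_def] using
    (continuous_sinc.tendsto 0).comp (tendsto_div_sqrt_natCast_nhds_zero a)

lemma tendsto_cos_div_sqrt_natCast (a : ℝ) :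
    Tendsto (fun n : ℕ => cos (a / √n)) atTop (𝓝 1) := by
  simpa [Function.comp_def] using
    (continuous_cos.tendsto 0).comp (tendsto_div_sqrt_natCast_nhds_zero a)

lemma tendsto_natCast_mul_cos_div_sqrt_sub_one (a : ℝ) :
    Tendsto (fun n : ℕ => n * (cos (a / √n) - 1)) atTop (𝓝 (-(a ^ 2 / 2))) := by
  refine (((tendsto_sinc_div_sqrt_natCast (a / 2)).pow 2).const_mul (-(a ^ 2 / 2))).congr' ?_
    |>.trans_eq (by simp)
  filter_upwards [eventually_ne_atTop 0] with n hn
  have hn' : (√n : ℝ) ^ 2 = n := sq_sqrt n.cast_nonneg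
  rw [cos_sub_one_eq_mul_sinc_sq, div_pow, hn', div_right_comm]
  field_simp

lemma tendsto_natCast_mul_overlap_sub_one (a b : ℝ) (c : ℂ) :
    Tendsto (fun n : ℕ => (n : ℂ) * ((cos (a / √n) * cos (b / √n) : ℝ) +
        (sinc (a / √n) * sinc (b / √n) : ℝ) * (c / n) - 1))
      atTop (𝓝 (c - (a ^ 2 / 2 : ℝ) - (b ^ 2 / 2 : ℝ))) := by
  have hreal := ((tendsto_natCast_mul_cos_div_sqrt_sub_one a).mul
    (tendsto_cos_div_sqrt_natCast b)).add (tendsto_natCast_mul_cos_div_sqrt_sub_one b)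
  have hsinc := (tendsto_sinc_div_sqrt_natCast a).mul (tendsto_sinc_div_sqrt_natCast b)
  have hcomplex := ((Complex.continuous_ofReal.tendsto _).comp hreal).add
    (((Complex.continuous_ofReal.tendsto _).comp hsinc).mul_const c)
  refine (hcomplex.congr' ?_).trans_eq ?_
  · filter_upwards [eventually_ne_atTop 0] with n hn
    simp only [Function.comp_apply, Complex.ofReal_add, Complex.ofReal_mul, Complex.ofReal_sub,
      Complex.ofReal_natCast, Complex.ofReal_one]
    field_simp
    ring
  · congr 1
    push_cast
    ring

end Limits

namespace QMCPaper

open Complex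

theorem matExp_eq_of_sq_eq_neg_sq {ι : Type*} [Fintype ι] [DecidableEq ι] {M : Matrix ι ι ℂ}
    {r : ℝ} (hM : M ^ 2 = -((r : ℂ) ^ 2) • 1) :
    matExp M = (Real.cos r : ℂ) • 1 + (Real.sinc r : ℂ) • M :=
  (hasSum_exp_series_of_sq_eq_neg_sq hM).tsum_eq

def qubitGenerator (w : ℂ) : Matrix (Fin 2) (Fin 2) ℂ := !![0, -conj w; w, 0]

lemma neg_I_smul_pauli_eq_qubitGenerator (w : ℂ) :
    (-I) • ((w.re : ℂ) • pauliY - (w.im : ℂ) • pauliX) = qubitGenerator w := by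
  ext i j
  fin_cases i <;> fin_cases j <;> simp [qubitGenerator, pauliX, pauliY, Complex.ext_iff]

lemma qubitGenerator_sq (w : ℂ) : qubitGenerator w ^ 2 = -((‖w‖ : ℂ) ^ 2) • 1 := by
  rw [qubitGenerator, sq, Matrix.mul_fin_two, Matrix.one_fin_two, Matrix.smul_of]
  simp [mul_conj', conj_mul']

lemma qubitState_re_im (w : ℂ) :
    qubitState w.re w.im = ![(Real.cos ‖w‖ : ℂ), Real.sinc ‖w‖ * w] := by
  rw [qubitState, neg_I_smul_pauli_eq_qubitGenerator,
    matExp_eq_of_sq_eq_neg_sq (qubitGenerator_sq w)]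
  ext i
  fin_cases i <;> simp [qubitGenerator, Matrix.mulVec, dotProduct]

lemma star_qubitState_dotProduct (w₁ w₂ : ℂ) :
    star (qubitState w₁.re w₁.im) ⬝ᵥ qubitState w₂.re w₂.im =
      (Real.cos ‖w₁‖ * Real.cos ‖w₂‖ : ℝ) +
        (Real.sinc ‖w₁‖ * Real.sinc ‖w₂‖ : ℝ) * (conj w₁ * w₂) := by
  simp only [qubitState_re_im, dotProduct, Fin.sum_univ_two, Pi.star_apply, Matrix.cons_val_zero,
    Matrix.cons_val_one, RCLike.star_def, map_mul, conj_ofReal, ofReal_mul]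
  ring

lemma star_qubitState_div_sqrt_dotProduct (z₁ z₂ : ℂ) (n : ℕ) :
    star (qubitState (z₁ / √n).re (z₁ / √n).im) ⬝ᵥ qubitState (z₂ / √n).re (z₂ / √n).im =
      (Real.cos (‖z₁‖ / √n) * Real.cos (‖z₂‖ / √n) : ℝ) +
        (Real.sinc (‖z₁‖ / √n) * Real.sinc (‖z₂‖ / √n) : ℝ) * (conj z₁ * z₂ / n) := by
  have hnorm (z : ℂ) : ‖z / √n‖ = ‖z‖ / √n := by
    rw [norm_div, norm_real, Real.norm_of_nonneg (Real.sqrt_nonneg _)]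
  have hsqrt : (√n : ℂ) * √n = n := by
    rw [← ofReal_mul, Real.mul_self_sqrt n.cast_nonneg, ofReal_natCast]
  rw [star_qubitState_dotProduct, hnorm, hnorm, map_div₀, conj_ofReal, div_mul_div_comm, hsqrt]

/-- weak quantum local asymptotic normality for pure qubit states:
the `n`-th power of the overlap of two locally rotated qubit states converges to the
overlap of the corresponding coherent states. -/
theorem weak_qlan_qubit (u₁ v₁ u₂ v₂ : ℝ) :
    Tendsto
      (fun n : ℕ =>
        (star (qubitState (u₁ / Real.sqrt n) (v₁ / Real.sqrt n)) ⬝ᵥ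
            qubitState (u₂ / Real.sqrt n) (v₂ / Real.sqrt n)) ^ n)
      atTop
      (nhds (Complex.exp
        (conj ((u₁ : ℂ) + (v₁ : ℂ) * Complex.I) * ((u₂ : ℂ) + (v₂ : ℂ) * Complex.I) -
          (Complex.normSq ((u₁ : ℂ) + (v₁ : ℂ) * Complex.I) : ℂ) / 2 -
          (Complex.normSq ((u₂ : ℂ) + (v₂ : ℂ) * Complex.I) : ℂ) / 2))) := by
  have hre_im (u v : ℝ) (n : ℕ) :
      qubitState (u / √n) (v / √n) = qubitState ((u + v * I) / √n).re ((u + v * I) / √n).im := by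
    simp
  simp only [hre_im, star_qubitState_div_sqrt_dotProduct, normSq_eq_norm_sq]
  convert tendsto_one_add_pow_exp_of_tendsto (tendsto_natCast_mul_overlap_sub_one
    ‖(u₁ : ℂ) + v₁ * I‖ ‖(u₂ : ℂ) + v₂ * I‖ (conj ((u₁ : ℂ) + v₁ * I) * (u₂ + v₂ * I))) using 2
  · rw [add_sub_cancel]
  · push_cast
    ring

end QMCPaper
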